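/- Let n be an odd number, d invertible in Z/nZ, a ∈ Z/nZ, and S = IAP((a,-d,d-a),(d,-2d,d)) in Z/nZ. Then the Steinhaus triangle ∇S[0,3n-1] of order 3n (generated by the first 3n terms of S) is balanced in Z/nZ: every element of Z/nZ occurs exactly (3n+1)·3/2 times. -/

import Mathlib

def IAP3 {G : Type*} [AddCommGroup G] (a0 a1 a2 d0 d1 d2 : G) : ℤ → G :=
  fun j => if j % 3 = 0 then a0 + (j / 3) • d0
    else if j % 3 = 1 then a1 + (j / 3) • d1
    else a2 + (j / 3) • d2

def steinhaus {n : ℕ} (x : ℕ → ZMod n) (m : ℕ) : Multiset (ZMod n) :=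
  ((Finset.range m ×ˢ Finset.range m).filter (fun p => p.1 + p.2 < m)).val.map
    (fun p => ∑ k ∈ Finset.range (p.1 + 1), p.1.choose k • x (p.2 + k))

/-! Row `i`, position `j` of `∇S` has a closed form (`iapEntry`): according to the class of
`i + 2j` mod 3 it is `±(a + q d)` or `±q d`, where the integer `q` is constant along a lattice
line of the triangle. Since `d` is a unit, the entries equal to a given `x` are the points whose
`q` lies in one residue class mod `n`, and the range of `q` is short enough that this picks out
two lines for class 2 and, for each sign, two lines of class 0 and two of class 1. Counting the
lattice points on these lines (with the parity of `i` fixed by the sign) gives `(3n + 1) / 2`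
three times. -/

open Finset

lemma card_filter_or_of_disjoint {α : Type*} [DecidableEq α] (s : Finset α) {P Q : α → Prop}
    [DecidablePred P] [DecidablePred Q] (h : ∀ x ∈ s, P x → ¬ Q x) :
    #{x ∈ s | P x ∨ Q x} = #{x ∈ s | P x} + #{x ∈ s | Q x} := by
  rw [filter_or, card_union_of_disjoint (disjoint_filter.2 h)]

lemma intCast_eq_intCast_iff_of_lt {n : ℕ} {q r : ℤ}
    (h₁ : r < q + 2 * n) (h₂ : q < r + 2 * n) :
    (q : ZMod n) = r ↔ q = r - n ∨ q = r ∨ q = r + n := by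
  rw [ZMod.intCast_eq_intCast_iff_dvd_sub]
  constructor
  · rintro ⟨k, hk⟩
    obtain ⟨hk₁, hk₂⟩ : -2 < k ∧ k < 2 := by constructor <;> nlinarith
    interval_cases k <;> omega
  · rintro (rfl | rfl | rfl)
    exacts [⟨1, by ring⟩, ⟨0, by ring⟩, ⟨-1, by ring⟩]

theorem sum_choose_nsmul_eq_of_pascal {M : Type*} [AddCommMonoid M] (F : ℕ → ℕ → M)
    (hF : ∀ i j, F (i + 1) j = F i j + F i (j + 1)) (i j : ℕ) :
    ∑ k ∈ range (i + 1), i.choose k • F 0 (j + k) = F i j := by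
  induction i generalizing j with
  | zero => simp
  | succ i ih =>
    rw [sum_choose_succ_nsmul (fun k _ => F 0 (j + k)), hF, ← ih, ← ih]
    simp only [add_assoc, add_comm 1]

def triangle (m : ℕ) : Finset (ℕ × ℕ) := {p ∈ range m ×ˢ range m | p.1 + p.2 < m}

@[simp] lemma mem_triangle {m : ℕ} {p : ℕ × ℕ} : p ∈ triangle m ↔ p.1 + p.2 < m := by
  simp only [triangle, mem_filter, mem_product, mem_range]
  omega

lemma count_steinhaus {n : ℕ} (x : ℕ → ZMod n) (m : ℕ) (y : ZMod n) :
    (steinhaus x m).count y =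
      #{p ∈ triangle m | ∑ k ∈ range (p.1 + 1), p.1.choose k • x (p.2 + k) = y} := by
  rw [steinhaus, Multiset.count_map, card_def, filter_val]
  simp only [eq_comm]
  rfl

/-- Closed form of `(∂ⁱ S)ⱼ` for `S = IAP((a, -d, d - a), (d, -2d, d))`; in each case the
division by 3 is exact. -/
def iapEntry {n : ℕ} (a d : ZMod n) (i j : ℕ) : ZMod n :=
  if (i + 2 * j) % 3 = 0 then (-1) ^ i * (a + (((j - i : ℤ) / 3 : ℤ) : ZMod n) * d)
  else if (i + 2 * j) % 3 = 1 then
    (-1) ^ (i + 1) * (a - (((2 * i + j + 1 : ℤ) / 3 : ℤ) : ZMod n) * d)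
  else (-1) ^ (i + 1) * ((((i + 2 * j + 1 : ℤ) / 3 : ℤ) : ZMod n) * d)

lemma iapEntry_succ {n : ℕ} (a d : ZMod n) (i j : ℕ) :
    iapEntry a d (i + 1) j = iapEntry a d i j + iapEntry a d i (j + 1) := by
  unfold iapEntry
  obtain h | h | h : (i + 2 * j) % 3 = 0 ∨ (i + 2 * j) % 3 = 1 ∨ (i + 2 * j) % 3 = 2 := by omega
  · rw [if_neg (by omega), if_pos (by omega), if_pos h, if_neg (by omega), if_neg (by omega),
      show (2 * ((i + 1 : ℕ) : ℤ) + j + 1) / 3 =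
        (i + 2 * ((j + 1 : ℕ) : ℤ) + 1) / 3 - (j - i) / 3 by push_cast; omega]
    push_cast; ring
  · rw [if_neg (by omega), if_neg (by omega), if_neg (by omega), if_pos h, if_pos (by omega),
      show ((i + 1 : ℕ) + 2 * (j : ℤ) + 1) / 3 =
        (2 * i + j + 1) / 3 + (((j + 1 : ℕ) : ℤ) - i) / 3 by push_cast; omega]
    push_cast; ring
  · rw [if_pos (by omega), if_neg (by omega), if_neg (by omega), if_neg (by omega),
      if_pos (by omega), show (i + 2 * (j : ℤ) + 1) / 3 =
        (2 * i + ((j + 1 : ℕ) : ℤ) + 1) / 3 + (j - ((i + 1 : ℕ) : ℤ)) / 3 by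
          push_cast; omega]
    push_cast; ring

lemma iapEntry_zero {n : ℕ} (a d : ZMod n) (j : ℕ) :
    iapEntry a d 0 j = IAP3 a (-d) (d - a) d (-(2 * d)) d j := by
  unfold iapEntry IAP3
  obtain h | h | h : j % 3 = 0 ∨ j % 3 = 1 ∨ j % 3 = 2 := by omega
  · rw [if_pos (by omega), if_pos (by omega), zsmul_eq_mul]
    simp
  · rw [if_neg (by omega), if_neg (by omega), if_neg (by omega), if_pos (by omega), zsmul_eq_mul,
      show (((0 : ℕ) : ℤ) + 2 * j + 1) / 3 = 2 * (j / 3) + 1 by omega]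
    push_cast; ring
  · rw [if_neg (by omega), if_pos (by omega), if_neg (by omega), if_neg (by omega), zsmul_eq_mul,
      show (2 * ((0 : ℕ) : ℤ) + j + 1) / 3 = j / 3 + 1 by omega]
    push_cast; ring

lemma iapEntry_eq_iff {n : ℕ} (a d x : ZMod n) (i j : ℕ) :
    iapEntry a d i j = x ↔
      ((i + 2 * j) % 3 = 2 ∧
        (((i + 2 * j + 1 : ℤ) / 3 : ℤ) : ZMod n) * d = (-1) ^ (i + 1) * x) ∨
      ((i + 2 * j) % 3 = 0 ∧ i % 2 = 0 ∧ (((j - i : ℤ) / 3 : ℤ) : ZMod n) * d = x - a ∨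
        (i + 2 * j) % 3 = 1 ∧ (i + 1) % 2 = 0 ∧
          ((-((2 * i + j + 1 : ℤ) / 3) : ℤ) : ZMod n) * d = x - a) ∨
      ((i + 2 * j) % 3 = 0 ∧ i % 2 = 1 ∧ (((j - i : ℤ) / 3 : ℤ) : ZMod n) * d = -x - a ∨
        (i + 2 * j) % 3 = 1 ∧ (i + 1) % 2 = 1 ∧
          ((-((2 * i + j + 1 : ℤ) / 3) : ℤ) : ZMod n) * d = -x - a) := by
  rw [iapEntry, neg_one_pow_eq_pow_mod_two i, neg_one_pow_eq_pow_mod_two (i + 1), Nat.add_mod i 1]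
  have : (i + 2 * j) % 3 < 3 := Nat.mod_lt _ (by norm_num)
  interval_cases h3 : (i + 2 * j) % 3 <;> rcases Nat.mod_two_eq_zero_or_one i with hi | hi <;>
    simp only [hi] <;> norm_num <;> constructor <;> intro h <;>
    first | linear_combination h | linear_combination -h

section Lines
variable (m : ℕ)

lemma card_triangle_filter_add_two_mul (s : ℕ) :
    #{p ∈ triangle m | p.1 + 2 * p.2 + 1 = s} = (s + 1) / 2 - (s - m) := by
  rw [← Nat.card_Ico]
  refine card_nbij' (fun p => p.2) (fun j => (s - 1 - 2 * j, j)) ?_ ?_ ?_ ?_ <;>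
    intro p <;> simp [Prod.ext_iff] <;> omega

lemma card_triangle_filter_two_mul_add (s ε : ℕ) (hε : ε < 2) :
    #{p ∈ triangle m | p.1 % 2 = ε ∧ 2 * p.1 + p.2 + 1 = s} =
      (s + 3 - 2 * ε) / 4 - (s + 1 - m - ε) / 2 := by
  rw [← Nat.card_Ico]
  refine card_nbij' (fun p => p.1 / 2) (fun r => (2 * r + ε, s - 1 - 2 * (2 * r + ε)))
    ?_ ?_ ?_ ?_ <;> intro p <;> simp [Prod.ext_iff] <;> omega

lemma card_triangle_filter_snd_eq_add (t ε : ℕ) (hε : ε < 2) :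
    #{p ∈ triangle m | p.1 % 2 = ε ∧ p.2 = p.1 + t} = (m + 3 - t - 2 * ε) / 4 := by
  rw [← card_range ((m + 3 - t - 2 * ε) / 4)]
  refine card_nbij' (fun p => p.1 / 2) (fun r => (2 * r + ε, 2 * r + ε + t)) ?_ ?_ ?_ ?_ <;>
    intro p <;> simp [Prod.ext_iff] <;> omega

lemma card_triangle_filter_fst_eq_add (t ε : ℕ) (hε : ε < 2) :
    #{p ∈ triangle m | p.1 % 2 = ε ∧ p.1 = p.2 + t} =
      (m + 3 - t - 2 * ((ε + t) % 2)) / 4 := by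
  rw [← card_range ((m + 3 - t - 2 * ((ε + t) % 2)) / 4)]
  refine card_nbij' (fun p => p.2 / 2) (fun r => (2 * r + (ε + t) % 2 + t, 2 * r + (ε + t) % 2))
    ?_ ?_ ?_ ?_ <;> intro p <;> simp [Prod.ext_iff] <;> omega

end Lines

section Blocks
variable {n : ℕ}

lemma card_triangle_filter_mod_three_eq_two (hn : Odd n) (c : ZMod n) :
    #{p ∈ triangle (3 * n) | (p.1 + 2 * p.2) % 3 = 2 ∧
      (((p.1 + 2 * p.2 + 1 : ℤ) / 3 : ℤ) : ZMod n) = (-1) ^ (p.1 + 1) * c} =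
      (3 * n + 1) / 2 := by
  have hn2 : n % 2 = 1 := Nat.odd_iff.mp hn
  obtain ⟨γ, hγ, rfl⟩ : ∃ γ < n, (γ : ZMod n) = c :=
    have : NeZero n := ⟨by omega⟩
    ⟨c.val, c.val_lt, ZMod.natCast_zmod_val c⟩
  obtain ⟨k, hk⟩ : ∃ k, k % 2 = 0 ∧ (k = γ ∨ k = γ + n) := by
    rcases Nat.mod_two_eq_zero_or_one γ with h | h
    exacts [⟨γ, h, .inl rfl⟩, ⟨γ + n, by omega, .inr rfl⟩]
  obtain ⟨k', hk'⟩ : ∃ k', k' % 2 = 1 ∧ (k' + γ = n ∨ k' + γ = 2 * n) := by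
    rcases Nat.mod_two_eq_zero_or_one γ with h | h
    exacts [⟨n - γ, by omega, .inl (by omega)⟩, ⟨2 * n - γ, by omega, .inr (by omega)⟩]
  -- On the line `i + 2j + 1 = 3V` the sign `(-1) ^ (i + 1)` is `(-1) ^ V`: the solutions are the
  -- even `V ≡ γ` and the odd `V ≡ -γ` in `[0, 2n)`.
  have hline : ∀ p ∈ triangle (3 * n), ((p.1 + 2 * p.2) % 3 = 2 ∧
      (((p.1 + 2 * p.2 + 1 : ℤ) / 3 : ℤ) : ZMod n) = (-1) ^ (p.1 + 1) * γ) ↔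
      p.1 + 2 * p.2 + 1 = 3 * k ∨ p.1 + 2 * p.2 + 1 = 3 * k' := by
    rintro ⟨i, j⟩ hp
    rw [mem_triangle] at hp
    dsimp only
    rw [neg_one_pow_eq_pow_mod_two]
    rcases Nat.mod_two_eq_zero_or_one (i + 1) with h | h <;> rw [h]
    · rw [pow_zero, one_mul, ← Int.cast_natCast γ,
        intCast_eq_intCast_iff_of_lt (by omega) (by omega)]
      omega
    · rw [pow_one, neg_one_mul, show -(γ : ZMod n) = ((n - γ : ℤ) : ZMod n) by simp,
        intCast_eq_intCast_iff_of_lt (by omega) (by omega)]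
      omega
  rw [filter_congr hline, card_filter_or_of_disjoint _ (fun p _ h₁ h₂ => by omega),
    card_triangle_filter_add_two_mul, card_triangle_filter_add_two_mul]
  omega

lemma card_triangle_filter_four_lines (hn : n % 2 = 1) {γ ε : ℕ} (hγ : γ < n) (hε : ε < 2) :
    #{p ∈ triangle (3 * n) |
      (p.1 % 2 = ε ∧ p.2 = p.1 + 3 * γ) ∨ (p.1 % 2 = ε ∧ p.1 = p.2 + 3 * (n - γ)) ∨
      (p.1 % 2 = 1 - ε ∧ 2 * p.1 + p.2 + 1 = 3 * (n - γ)) ∨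
      (p.1 % 2 = 1 - ε ∧ 2 * p.1 + p.2 + 1 = 3 * (2 * n - γ))} = (3 * n + 1) / 2 := by
  rw [card_filter_or_of_disjoint _ (fun p _ h₁ h₂ => by omega),
    card_filter_or_of_disjoint _ (fun p _ h₁ h₂ => by omega),
    card_filter_or_of_disjoint _ (fun p _ h₁ h₂ => by omega),
    card_triangle_filter_snd_eq_add _ _ _ hε, card_triangle_filter_fst_eq_add _ _ _ hε,
    card_triangle_filter_two_mul_add _ _ _ (by omega),
    card_triangle_filter_two_mul_add _ _ _ (by omega)]
  -- The floors above are resolved by the residues of `γ` and `n` mod 4.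
  have : γ % 4 < 4 := Nat.mod_lt _ (by norm_num)
  have : n % 4 = 1 ∨ n % 4 = 3 := by omega
  interval_cases h : γ % 4 <;> interval_cases ε <;> omega

lemma card_triangle_filter_mod_three_lt_two (hn : Odd n) (ε : ℕ) (hε : ε < 2) (c : ZMod n) :
    #{p ∈ triangle (3 * n) |
      (p.1 + 2 * p.2) % 3 = 0 ∧ p.1 % 2 = ε ∧ (((p.2 - p.1 : ℤ) / 3 : ℤ) : ZMod n) = c ∨
      (p.1 + 2 * p.2) % 3 = 1 ∧ (p.1 + 1) % 2 = ε ∧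
        ((-((2 * p.1 + p.2 + 1 : ℤ) / 3) : ℤ) : ZMod n) = c} = (3 * n + 1) / 2 := by
  have hn2 : n % 2 = 1 := Nat.odd_iff.mp hn
  obtain ⟨γ, hγ, rfl⟩ : ∃ γ < n, (γ : ZMod n) = c :=
    have : NeZero n := ⟨by omega⟩
    ⟨c.val, c.val_lt, ZMod.natCast_zmod_val c⟩
  -- `(j - i) / 3 ∈ (-n, n)` and `-(2i + j + 1) / 3 ∈ (-2n, 0)`: each of these indices is `≡ γ`
  -- for exactly two of its possible values.
  have hline : ∀ p ∈ triangle (3 * n),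
      ((p.1 + 2 * p.2) % 3 = 0 ∧ p.1 % 2 = ε ∧
        (((p.2 - p.1 : ℤ) / 3 : ℤ) : ZMod n) = γ ∨
      (p.1 + 2 * p.2) % 3 = 1 ∧ (p.1 + 1) % 2 = ε ∧
        ((-((2 * p.1 + p.2 + 1 : ℤ) / 3) : ℤ) : ZMod n) = γ) ↔
      (p.1 % 2 = ε ∧ p.2 = p.1 + 3 * γ) ∨ (p.1 % 2 = ε ∧ p.1 = p.2 + 3 * (n - γ)) ∨
      (p.1 % 2 = 1 - ε ∧ 2 * p.1 + p.2 + 1 = 3 * (n - γ)) ∨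
      (p.1 % 2 = 1 - ε ∧ 2 * p.1 + p.2 + 1 = 3 * (2 * n - γ)) := by
    rintro ⟨i, j⟩ hp
    rw [mem_triangle] at hp
    dsimp only
    rw [← Int.cast_natCast γ, intCast_eq_intCast_iff_of_lt (by omega) (by omega),
      show ((γ : ℤ) : ZMod n) = ((γ - n : ℤ) : ZMod n) by simp,
      intCast_eq_intCast_iff_of_lt (by omega) (by omega)]
    omega
  rw [filter_congr hline, card_triangle_filter_four_lines hn2 hγ hε]

end Blocks

theorem stmt16 (n : ℕ) (hn : Odd n) (a d : ZMod n) (hd : IsUnit d) :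
    ∀ x : ZMod n,
      (steinhaus (fun t : ℕ => IAP3 a (-d) (d - a) d (-(2 * d)) d (t : ℤ)) (3 * n)).count x =
        (3 * (3 * n + 1)) / 2 := by
  intro x
  obtain ⟨v, rfl⟩ := hd
  have hn2 : n % 2 = 1 := Nat.odd_iff.mp hn
  simp only [count_steinhaus, ← iapEntry_zero,
    sum_choose_nsmul_eq_of_pascal _ (iapEntry_succ a v), iapEntry_eq_iff,
    ← Units.eq_mul_inv_iff_mul_eq, mul_assoc]
  rw [card_filter_or_of_disjoint _ (fun p _ h₁ h₂ => by omega),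
    card_filter_or_of_disjoint _ (fun p _ h₁ h₂ => by omega),
    card_triangle_filter_mod_three_eq_two hn,
    card_triangle_filter_mod_three_lt_two hn 0 (by norm_num),
    card_triangle_filter_mod_three_lt_two hn 1 (by norm_num)]
  omega
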